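/- Let g be analytic and zero-free on the unit disc, β ∈ ℝ, and g^β := exp(β h) for a fixed branch h of log g. Then for all ε ≠ 1, S_{g^β} T²_{g^β} = ((2β−1)β/(1−ε)) T_g T_{g^{1−ε}} M_{g^{2β−2+ε}} T_{g^β} + (β²/(1−ε)) T_g T_{g^{1−ε}} M_{g^{3β−2+ε}} as operators on analytic functions on 𝔻. -/

import Mathlib

open Complex Metric Set

noncomputable def Tg (g f : ℂ → ℂ) (z : ℂ) : ℂ :=
  ∫ t in (0:ℝ)..1, f ((t : ℂ) * z) * deriv g ((t : ℂ) * z) * z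

noncomputable def Sg (g f : ℂ → ℂ) (z : ℂ) : ℂ :=
  ∫ t in (0:ℝ)..1, deriv f ((t : ℂ) * z) * g ((t : ℂ) * z) * z

open MeasureTheory intervalIntegral

lemma mem_ball_mul {z : ℂ} (hz : z ∈ ball (0:ℂ) 1) {t : ℝ} (h0 : 0 ≤ t) (h1 : t ≤ 1) :
    (t:ℂ) * z ∈ ball (0:ℂ) 1 := by
  rw [mem_ball_zero_iff] at hz ⊢
  calc ‖(t:ℂ) * z‖ = t * ‖z‖ := by
        rw [norm_mul, Complex.norm_real, Real.norm_eq_abs, _root_.abs_of_nonneg h0]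
    _ ≤ 1 * ‖z‖ := by gcongr
    _ < 1 := by simpa using hz

set_option maxHeartbeats 1000000 in
lemma key_hasDerivAt (u : ℂ → ℂ)
    (hu : DifferentiableOn ℂ u (ball (0:ℂ) 1))
    {w : ℂ} (hw : w ∈ ball (0:ℂ) 1) :
    HasDerivAt (fun z => ∫ t in (0:ℝ)..1, u ((t:ℂ)*z) * z) (u w) w := by
  have hu' : DifferentiableOn ℂ (deriv u) (ball (0:ℂ) 1) :=
    ((hu.analyticOnNhd isOpen_ball).deriv).differentiableOn
  rw [mem_ball_zero_iff] at hw
  set δ : ℝ := (1 - ‖w‖)/2 with hδ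
  have hδpos : 0 < δ := by rw [hδ]; linarith
  have hball : ∀ z ∈ ball w δ, ‖z‖ < 1 := by
    intro z hzz
    rw [mem_ball, dist_eq_norm] at hzz
    calc ‖z‖ = ‖w + (z - w)‖ := by ring_nf
      _ ≤ ‖w‖ + ‖z - w‖ := norm_add_le _ _
      _ < ‖w‖ + δ := by linarith
      _ < 1 := by rw [hδ]; linarith
  set r : ℝ := ‖w‖ + δ with hr
  have hr1 : r < 1 := by rw [hr, hδ]; linarith
  have hballr : ∀ z ∈ ball w δ, ‖z‖ ≤ r := by
    intro z hzz
    rw [mem_ball, dist_eq_norm] at hzz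
    calc ‖z‖ = ‖w + (z - w)‖ := by ring_nf
      _ ≤ ‖w‖ + ‖z - w‖ := norm_add_le _ _
      _ ≤ r := by rw [hr]; linarith
  have hsub : closedBall (0:ℂ) r ⊆ ball (0:ℂ) 1 := by
    intro x hx
    rw [mem_closedBall_zero_iff] at hx
    rw [mem_ball_zero_iff]
    linarith
  obtain ⟨C₁, hC₁⟩ := (isCompact_closedBall (0:ℂ) r).exists_bound_of_continuousOn
    (hu.continuousOn.mono hsub)
  obtain ⟨C₂, hC₂⟩ := (isCompact_closedBall (0:ℂ) r).exists_bound_of_continuousOn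
    (hu'.continuousOn.mono hsub)
  have hmemr : ∀ z ∈ ball w δ, ∀ t ∈ Set.Ioc (0:ℝ) 1, (t:ℂ)*z ∈ closedBall (0:ℂ) r := by
    intro z hzz t ht
    rw [mem_closedBall_zero_iff, norm_mul, Complex.norm_real, Real.norm_eq_abs,
      _root_.abs_of_nonneg ht.1.le]
    have := hballr z hzz
    have h0 : 0 ≤ ‖z‖ := norm_nonneg _
    have h0r : 0 ≤ r := le_trans h0 this
    nlinarith [ht.2, ht.1.le]
  have hcmul : Continuous (fun t : ℝ => (t:ℂ)) := Complex.continuous_ofReal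
  have hF_meas : ∀ᶠ x in nhds w, AEStronglyMeasurable
      (fun t : ℝ => u ((t:ℂ)*x) * x) (volume.restrict (Set.uIoc (0:ℝ) 1)) := by
    filter_upwards [Metric.ball_mem_nhds w hδpos] with z hzz
    have hc : ContinuousOn (fun t : ℝ => u ((t:ℂ)*z) * z) (Set.uIoc (0:ℝ) 1) := by
      apply ContinuousOn.mul _ continuousOn_const
      apply hu.continuousOn.comp ((hcmul.mul continuous_const).continuousOn)
      intro t ht
      rw [Set.uIoc_of_le zero_le_one] at ht
      exact mem_ball_mul (mem_ball_zero_iff.mpr (hball z hzz)) ht.1.le ht.2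
    exact hc.aestronglyMeasurable measurableSet_uIoc
  have hF_int : IntervalIntegrable (fun t : ℝ => u ((t:ℂ)*w) * w) volume 0 1 := by
    apply ContinuousOn.intervalIntegrable
    apply ContinuousOn.mul _ continuousOn_const
    apply hu.continuousOn.comp ((hcmul.mul continuous_const).continuousOn)
    intro t ht
    rw [Set.uIcc_of_le zero_le_one] at ht
    exact mem_ball_mul (mem_ball_zero_iff.mpr hw) ht.1 ht.2
  have hF'contIcc : ContinuousOn (fun t : ℝ => deriv u ((t:ℂ)*w) * (t:ℂ) * w + u ((t:ℂ)*w))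
      (Set.uIcc (0:ℝ) 1) := by
    have hmap : Set.MapsTo (fun t : ℝ => (t:ℂ)*w) (Set.uIcc (0:ℝ) 1) (ball (0:ℂ) 1) := by
      intro t ht
      rw [Set.uIcc_of_le zero_le_one] at ht
      exact mem_ball_mul (mem_ball_zero_iff.mpr hw) ht.1 ht.2
    have hcont : ContinuousOn (fun t : ℝ => (t:ℂ)*w) (Set.uIcc (0:ℝ) 1) :=
      (hcmul.mul continuous_const).continuousOn
    exact (((hu'.continuousOn.comp hcont hmap).mul
      (hcmul.continuousOn)).mul continuousOn_const).add
      (hu.continuousOn.comp hcont hmap)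
  have hF'_meas : AEStronglyMeasurable
      (fun t : ℝ => deriv u ((t:ℂ)*w) * (t:ℂ) * w + u ((t:ℂ)*w))
      (volume.restrict (Set.uIoc (0:ℝ) 1)) := by
    apply (hF'contIcc.mono _).aestronglyMeasurable measurableSet_uIoc
    rw [Set.uIoc_of_le zero_le_one, Set.uIcc_of_le zero_le_one]
    exact Set.Ioc_subset_Icc_self
  have h_bound : ∀ᵐ t ∂(volume : Measure ℝ), t ∈ Set.uIoc (0:ℝ) 1 → ∀ z ∈ ball w δ,
      ‖deriv u ((t:ℂ)*z) * (t:ℂ) * z + u ((t:ℂ)*z)‖ ≤ C₂ + C₁ := by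
    refine MeasureTheory.ae_of_all _ fun t ht z hzz => ?_
    rw [Set.uIoc_of_le zero_le_one] at ht
    have h1 : (t:ℂ)*z ∈ closedBall (0:ℂ) r := hmemr z hzz t ht
    have hb1 := hC₂ _ h1
    have hb2 := hC₁ _ h1
    have hzn : ‖z‖ ≤ 1 := (hball z hzz).le
    have htn : ‖(t:ℂ)‖ ≤ 1 := by
      rw [Complex.norm_real, Real.norm_eq_abs, _root_.abs_of_nonneg ht.1.le]; exact ht.2
    calc ‖deriv u ((t:ℂ)*z) * (t:ℂ) * z + u ((t:ℂ)*z)‖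
        ≤ ‖deriv u ((t:ℂ)*z) * (t:ℂ) * z‖ + ‖u ((t:ℂ)*z)‖ := norm_add_le _ _
      _ ≤ C₂ + C₁ := by
          have h0 : (0:ℝ) ≤ ‖deriv u ((t:ℂ)*z)‖ := norm_nonneg _
          have : ‖deriv u ((t:ℂ)*z) * (t:ℂ) * z‖ ≤ C₂ := by
            rw [norm_mul, norm_mul]
            calc ‖deriv u ((t:ℂ)*z)‖ * ‖(t:ℂ)‖ * ‖z‖ ≤ C₂ * 1 * 1 := by
                  gcongr <;> first | exact le_trans h0 hb1 | exact hb1 | exact htn | exact hzn | positivity | nlinarith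
              _ = C₂ := by ring
          linarith
  have h_diff : ∀ᵐ t ∂(volume : Measure ℝ), t ∈ Set.uIoc (0:ℝ) 1 → ∀ z ∈ ball w δ,
      HasDerivAt (fun x => u ((t:ℂ)*x) * x)
        (deriv u ((t:ℂ)*z) * (t:ℂ) * z + u ((t:ℂ)*z)) z := by
    refine MeasureTheory.ae_of_all _ fun t ht z hzz => ?_
    rw [Set.uIoc_of_le zero_le_one] at ht
    have hmem : (t:ℂ)*z ∈ ball (0:ℂ) 1 :=
      mem_ball_mul (mem_ball_zero_iff.mpr (hball z hzz)) ht.1.le ht.2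
    have hdu : HasDerivAt u (deriv u ((t:ℂ)*z)) ((t:ℂ)*z) :=
      (hu.differentiableAt (isOpen_ball.mem_nhds hmem)).hasDerivAt
    have h1 : HasDerivAt (fun x : ℂ => (t:ℂ)*x) (t:ℂ) z := by
      simpa using (hasDerivAt_id z).const_mul (t:ℂ)
    have h2 : HasDerivAt (fun x : ℂ => u ((t:ℂ)*x)) (deriv u ((t:ℂ)*z) * (t:ℂ)) z :=
      HasDerivAt.comp z hdu h1
    have h3 := h2.mul (hasDerivAt_id z)
    exact h3.congr_deriv (by simp)
  have main := intervalIntegral.hasDerivAt_integral_of_dominated_loc_of_deriv_le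
    (Metric.ball_mem_nhds w hδpos) hF_meas hF_int hF'_meas h_bound (_root_.intervalIntegrable_const (c := C₂ + C₁)) h_diff
  have hw' : w ∈ ball (0:ℂ) 1 := mem_ball_zero_iff.mpr hw
  have hFTC : (∫ t in (0:ℝ)..1, (deriv u ((t:ℂ)*w) * (t:ℂ) * w + u ((t:ℂ)*w))) = u w := by
    have hmem : ∀ t ∈ Set.uIcc (0:ℝ) 1, (t:ℂ)*w ∈ ball (0:ℂ) 1 := by
      intro t ht
      rw [Set.uIcc_of_le zero_le_one] at ht
      exact mem_ball_mul hw' ht.1 ht.2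
    have hder : ∀ t ∈ Set.uIcc (0:ℝ) 1, HasDerivAt (fun s : ℝ => (s:ℂ) * u ((s:ℂ)*w))
        (deriv u ((t:ℂ)*w) * (t:ℂ) * w + u ((t:ℂ)*w)) t := by
      intro t ht
      have hdu : HasDerivAt u (deriv u ((t:ℂ)*w)) ((t:ℂ)*w) :=
        (hu.differentiableAt (isOpen_ball.mem_nhds (hmem t ht))).hasDerivAt
      have h1 : HasDerivAt (fun y : ℂ => u (y*w)) (deriv u ((t:ℂ)*w) * w) (t:ℂ) := by
        have := HasDerivAt.comp (t:ℂ) hdu (by simpa using (hasDerivAt_id (t:ℂ)).mul_const w)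
        exact this
      have h2 : HasDerivAt (fun s : ℝ => u ((s:ℂ)*w)) (deriv u ((t:ℂ)*w) * w) t :=
        h1.comp_ofReal
      have h3 : HasDerivAt (fun s : ℝ => (s:ℂ)) 1 t := Complex.ofRealCLM.hasDerivAt
      have := h3.mul h2
      exact this.congr_deriv (by ring)
    have hint : IntervalIntegrable (fun t : ℝ => deriv u ((t:ℂ)*w) * (t:ℂ) * w + u ((t:ℂ)*w))
        volume 0 1 := hF'contIcc.intervalIntegrable
    have := intervalIntegral.integral_eq_sub_of_hasDerivAt hder hint
    simpa using this
  rw [hFTC] at main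
  exact main.2


lemma Tg_hasDerivAt {v f : ℂ → ℂ}
    (hvf : DifferentiableOn ℂ (fun w => f w * deriv v w) (ball (0:ℂ) 1))
    {w : ℂ} (hw : w ∈ ball (0:ℂ) 1) :
    HasDerivAt (Tg v f) (f w * deriv v w) w := by
  have := key_hasDerivAt (fun w => f w * deriv v w) hvf hw
  exact this

lemma Tg_zero (v f : ℂ → ℂ) : Tg v f 0 = 0 := by
  simp [Tg]

set_option maxHeartbeats 1000000 in
theorem SgTg_sq_identity (g h : ℂ → ℂ)
    (hg : DifferentiableOn ℂ g (ball (0:ℂ) 1))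
    (hh : DifferentiableOn ℂ h (ball (0:ℂ) 1))
    (hgh : ∀ z ∈ ball (0:ℂ) 1, Complex.exp (h z) = g z)
    (gp : ℝ → ℂ → ℂ) (hgp : ∀ (α : ℝ) (z : ℂ), gp α z = Complex.exp ((α : ℂ) * h z))
    (β ε : ℝ) (hε : ε ≠ 1)
    (f : ℂ → ℂ) (hf : DifferentiableOn ℂ f (ball (0:ℂ) 1))
    (z : ℂ) (hz : z ∈ ball (0:ℂ) 1) :
    Sg (gp β) (Tg (gp β) (Tg (gp β) f)) z
      = (((2 * β - 1) * β / (1 - ε) : ℝ) : ℂ)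
          * Tg g (Tg (gp (1 - ε)) (fun w => gp (2 * β - 2 + ε) w * Tg (gp β) f w)) z
        + ((β ^ 2 / (1 - ε) : ℝ) : ℂ)
          * Tg g (Tg (gp (1 - ε)) (fun w => gp (3 * β - 2 + ε) w * f w)) z := by
  have hhd : ∀ w ∈ ball (0:ℂ) 1, HasDerivAt h (deriv h w) w := fun w hw =>
    (hh.differentiableAt (isOpen_ball.mem_nhds hw)).hasDerivAt
  have hgpfun : ∀ α : ℝ, gp α = fun z => Complex.exp ((α:ℂ) * h z) := fun α => funext (hgp α)
  have hgpdiff : ∀ α : ℝ, DifferentiableOn ℂ (gp α) (ball (0:ℂ) 1) := by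
    intro α; rw [hgpfun α]; exact (hh.const_mul _).cexp
  have hgpderiv : ∀ (α : ℝ), ∀ w ∈ ball (0:ℂ) 1,
      HasDerivAt (gp α) ((α:ℂ) * deriv h w * gp α w) w := by
    intro α w hw
    have h1 := ((hhd w hw).const_mul ((α:ℂ))).cexp
    have h2 : HasDerivAt (gp α) (Complex.exp ((α:ℂ) * h w) * ((α:ℂ) * deriv h w)) w := by
      rw [hgpfun α]; exact h1
    convert h2 using 1
    rw [hgp α w]; ring
  have hgderiv : ∀ w ∈ ball (0:ℂ) 1, HasDerivAt g (deriv h w * g w) w := by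
    intro w hw
    have he : (fun z => Complex.exp (h z)) =ᶠ[nhds w] g := by
      filter_upwards [isOpen_ball.mem_nhds hw] with x hx
      exact hgh x hx
    have h1 := (hhd w hw).cexp
    have h2 := h1.congr_of_eventuallyEq he.symm
    rw [hgh w hw] at h2
    rw [mul_comm]; exact h2
  have derivdiff : ∀ u : ℂ → ℂ, DifferentiableOn ℂ u (ball (0:ℂ) 1) →
      DifferentiableOn ℂ (deriv u) (ball (0:ℂ) 1) := fun u hu =>
    ((hu.analyticOnNhd isOpen_ball).deriv).differentiableOn
  set T1 := Tg (gp β) f with hT1def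
  have hu1 : DifferentiableOn ℂ (fun w => f w * deriv (gp β) w) (ball (0:ℂ) 1) :=
    hf.mul (derivdiff _ (hgpdiff β))
  have hT1d : ∀ w ∈ ball (0:ℂ) 1, HasDerivAt T1 (f w * deriv (gp β) w) w :=
    fun w hw => Tg_hasDerivAt hu1 hw
  have hT1diff : DifferentiableOn ℂ T1 (ball (0:ℂ) 1) := fun w hw =>
    ((hT1d w hw).differentiableAt).differentiableWithinAt
  set T2 := Tg (gp β) T1 with hT2def
  have hu2 : DifferentiableOn ℂ (fun w => T1 w * deriv (gp β) w) (ball (0:ℂ) 1) :=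
    hT1diff.mul (derivdiff _ (hgpdiff β))
  have hT2d : ∀ w ∈ ball (0:ℂ) 1, HasDerivAt T2 (T1 w * deriv (gp β) w) w :=
    fun w hw => Tg_hasDerivAt hu2 hw
  set fA := fun w => gp (2*β-2+ε) w * T1 w with hfAdef
  set fB := fun w => gp (3*β-2+ε) w * f w with hfBdef
  set A := Tg (gp (1-ε)) fA with hAdef
  set B := Tg (gp (1-ε)) fB with hBdef
  have huA : DifferentiableOn ℂ (fun w => fA w * deriv (gp (1-ε)) w) (ball (0:ℂ) 1) :=
    ((hgpdiff _).mul hT1diff).mul (derivdiff _ (hgpdiff _))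
  have hAd : ∀ w ∈ ball (0:ℂ) 1, HasDerivAt A (fA w * deriv (gp (1-ε)) w) w :=
    fun w hw => Tg_hasDerivAt huA hw
  have hAdiff : DifferentiableOn ℂ A (ball (0:ℂ) 1) := fun w hw =>
    ((hAd w hw).differentiableAt).differentiableWithinAt
  have huB : DifferentiableOn ℂ (fun w => fB w * deriv (gp (1-ε)) w) (ball (0:ℂ) 1) :=
    ((hgpdiff _).mul hf).mul (derivdiff _ (hgpdiff _))
  have hBd : ∀ w ∈ ball (0:ℂ) 1, HasDerivAt B (fB w * deriv (gp (1-ε)) w) w :=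
    fun w hw => Tg_hasDerivAt huB hw
  have hBdiff : DifferentiableOn ℂ B (ball (0:ℂ) 1) := fun w hw =>
    ((hBd w hw).differentiableAt).differentiableWithinAt
  have gpmul : ∀ (a b : ℝ) (x : ℂ), gp a x * gp b x = gp (a+b) x := by
    intro a b x
    rw [hgp a x, hgp b x, hgp (a+b) x, ← Complex.exp_add]
    congr 1
    push_cast
    ring
  set c1 : ℂ := (((2 * β - 1) * β / (1 - ε) : ℝ) : ℂ) with hc1def
  set c2 : ℂ := ((β ^ 2 / (1 - ε) : ℝ) : ℂ) with hc2def
  have hεR : (1 - ε : ℝ) ≠ 0 := sub_ne_zero.mpr (Ne.symm hε)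
  have e3 : c1 * ((1 - ε : ℝ) : ℂ) = (((2*β-1)*β : ℝ) : ℂ) := by
    rw [hc1def, ← Complex.ofReal_mul, div_mul_cancel₀ _ hεR]
  have e4 : c2 * ((1 - ε : ℝ) : ℂ) = ((β^2 : ℝ) : ℂ) := by
    rw [hc2def, ← Complex.ofReal_mul, div_mul_cancel₀ _ hεR]
  -- key pointwise identity
  have key : ∀ w ∈ ball (0:ℂ) 1,
      (β:ℂ) * gp (2*β-1) w * T1 w = c1 * A w + c2 * B w := by
    intro w hw
    set E := fun x => (β:ℂ) * gp (2*β-1) x * T1 x - c1 * A x - c2 * B x with hEdef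
    have hE0 : E 0 = 0 := by
      simp [hEdef, hT1def, hAdef, hBdef, Tg_zero]
    have hEd : ∀ x ∈ ball (0:ℂ) 1, HasDerivAt E 0 x := by
      intro x hx
      have d1 := ((hgpderiv (2*β-1) x hx).const_mul ((β:ℂ))).mul (hT1d x hx)
      have d2 := (hAd x hx).const_mul c1
      have d3 := (hBd x hx).const_mul c2
      have dE := (d1.sub d2).sub d3
      have hval : (β:ℂ) * (((2*β-1:ℝ):ℂ) * deriv h x * gp (2*β-1) x) * T1 x
            + (β:ℂ) * gp (2*β-1) x * (f x * deriv (gp β) x)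
          - c1 * (fA x * deriv (gp (1-ε)) x) - c2 * (fB x * deriv (gp (1-ε)) x) = 0 := by
        rw [(hgpderiv β x hx).deriv, (hgpderiv (1-ε) x hx).deriv]
        simp only [hfAdef, hfBdef]
        have e1 : gp (2*β-2+ε) x * gp (1-ε) x = gp (2*β-1) x := by
          rw [gpmul]; congr 1; ring
        have e2 : gp (3*β-2+ε) x * gp (1-ε) x = gp (2*β-1) x * gp β x := by
          rw [gpmul, gpmul]; congr 1; ring
        push_cast at e3 e4 ⊢
        linear_combination (-(c1*(1-(ε:ℂ))*deriv h x*T1 x))*e1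
          + (-(c2*(1-(ε:ℂ))*deriv h x*f x))*e2
          + (-(deriv h x*T1 x*gp (2*β-1) x))*e3
          + (-(deriv h x*f x*gp (2*β-1) x*gp β x))*e4
      exact hval ▸ dE
    have hfd : ∀ x ∈ ball (0:ℂ) 1, HasFDerivWithinAt E (0 : ℂ →L[ℂ] ℂ) (ball (0:ℂ) 1) x := by
      intro x hx
      have h1 := (hEd x hx).hasFDerivAt
      have h2 : ContinuousLinearMap.toSpanSingleton ℂ (0:ℂ) = 0 := by
        ext1; simp
      rw [h2] at h1
      exact h1.hasFDerivWithinAt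
    have hconv := Convex.norm_image_sub_le_of_norm_hasFDerivWithin_le
      (f' := fun _ => (0 : ℂ →L[ℂ] ℂ)) (C := 0) hfd
      (fun x _ => by simp) (convex_ball (0:ℂ) 1) (mem_ball_self one_pos) hw
    have hEw : E w = 0 := by
      rw [hE0] at hconv
      simpa using norm_le_zero_iff.mp (by simpa using hconv)
    simp only [hEdef] at hEw
    linear_combination hEw
  -- points on the ray
  have hzIcc : ∀ t ∈ Set.uIcc (0:ℝ) 1, (t:ℂ)*z ∈ ball (0:ℂ) 1 := by
    intro t ht; rw [Set.uIcc_of_le zero_le_one] at ht; exact mem_ball_mul hz ht.1 ht.2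
  have hpoint : ∀ t ∈ Set.uIcc (0:ℝ) 1,
      deriv T2 ((t:ℂ)*z) * gp β ((t:ℂ)*z) * z
        = c1 * (A ((t:ℂ)*z) * deriv g ((t:ℂ)*z) * z)
          + c2 * (B ((t:ℂ)*z) * deriv g ((t:ℂ)*z) * z) := by
    intro t ht
    set w := (t:ℂ)*z with hwdef
    have hw : w ∈ ball (0:ℂ) 1 := hzIcc t ht
    have hk := key w hw
    have hdg : deriv g w = deriv h w * g w := (hgderiv w hw).deriv
    have hdT2 : deriv T2 w = T1 w * deriv (gp β) w := (hT2d w hw).deriv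
    have hdgp : deriv (gp β) w = (β:ℂ) * deriv h w * gp β w := (hgpderiv β w hw).deriv
    have hq2 : gp β w * gp β w = gp (2*β-1) w * gp 1 w := by
      rw [gpmul, gpmul]; congr 1; ring
    have hg1 : gp 1 w = g w := by
      rw [hgp 1 w, ← hgh w hw]; push_cast; rw [one_mul]
    rw [hdT2, hdgp, hdg]
    linear_combination (deriv h w * g w * z) * hk
      + ((β:ℂ) * T1 w * deriv h w * z) * hq2
      + ((β:ℂ) * T1 w * deriv h w * z * gp (2*β-1) w) * hg1
  have hcont_ray : ∀ u : ℂ → ℂ, ContinuousOn u (ball (0:ℂ) 1) →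
      ContinuousOn (fun t : ℝ => u ((t:ℂ)*z)) (Set.uIcc (0:ℝ) 1) := fun u hu =>
    hu.comp ((Complex.continuous_ofReal.mul continuous_const).continuousOn) hzIcc
  have hXint : IntervalIntegrable
      (fun t : ℝ => A ((t:ℂ)*z) * deriv g ((t:ℂ)*z) * z) volume 0 1 :=
    (((hcont_ray A hAdiff.continuousOn).mul
      (hcont_ray _ (derivdiff g hg).continuousOn)).mul continuousOn_const).intervalIntegrable
  have hYint : IntervalIntegrable
      (fun t : ℝ => B ((t:ℂ)*z) * deriv g ((t:ℂ)*z) * z) volume 0 1 :=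
    (((hcont_ray B hBdiff.continuousOn).mul
      (hcont_ray _ (derivdiff g hg).continuousOn)).mul continuousOn_const).intervalIntegrable
  calc Sg (gp β) T2 z
      = ∫ t in (0:ℝ)..1, (c1 * (A ((t:ℂ)*z) * deriv g ((t:ℂ)*z) * z)
          + c2 * (B ((t:ℂ)*z) * deriv g ((t:ℂ)*z) * z)) := by
        apply intervalIntegral.integral_congr
        intro t ht
        exact hpoint t ht
    _ = c1 * (∫ t in (0:ℝ)..1, A ((t:ℂ)*z) * deriv g ((t:ℂ)*z) * z)
          + c2 * (∫ t in (0:ℝ)..1, B ((t:ℂ)*z) * deriv g ((t:ℂ)*z) * z) := by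
        rw [intervalIntegral.integral_add (hXint.const_mul c1) (hYint.const_mul c2),
          intervalIntegral.integral_const_mul, intervalIntegral.integral_const_mul]
    _ = c1 * Tg g A z + c2 * Tg g B z := rfl
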